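/- Let E(0,∞) be a Calkin function space (a linear subspace of S(0,∞) closed under domination of decreasing rearrangements). Then E(ℤ) := {x ∈ S(ℤ) : Dx ∈ E(0,∞)} is a shift-monotone sequence space: it is linear, closed under the right shift S₊, and if o(y) ≤ o(x) pointwise with x ∈ E(ℤ) then y ∈ E(ℤ). -/

import Mathlib

open MeasureTheory Real

/-- Ordering number `o_n(x) = sup_{k ≥ n} |x_k|`. -/
noncomputable def ordNum (x : ℤ → ℝ) (n : ℤ) : ℝ :=
  ⨆ k : {k : ℤ // n ≤ k}, |x k.1|

/-- `x ∈ S(ℤ)`: bounded at `+∞`. -/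
def memSZ (x : ℤ → ℝ) : Prop :=
  ∀ n : ℤ, BddAbove (Set.range fun k : {k : ℤ // n ≤ k} => |x k.1|)

/-- Pietsch operator: `Dx = Σ_{n∈ℤ} x_n χ_{[2^n,2^{n+1})}` (and `0` off `(0,∞)`). -/
noncomputable def Dop (x : ℤ → ℝ) (t : ℝ) : ℝ :=
  if 0 < t then x ⌊Real.logb 2 t⌋ else 0

/-- Decreasing rearrangement of a function on `(0,∞)`. -/
noncomputable def rearr (f : ℝ → ℝ) (t : ℝ) : ℝ :=
  sInf {s : ℝ | 0 ≤ s ∧ volume {u : ℝ | 0 < u ∧ s < |f u|} ≤ ENNReal.ofReal t}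

/-- Right shift `(S₊x)_n = x_{n-1}`. -/
def shiftR (x : ℤ → ℝ) : ℤ → ℝ := fun n => x (n - 1)

/-! On the set where `|D z| > s`, `D z` lives on the dyadic blocks `[2ⁿ, 2ⁿ⁺¹)` with `s < |zₙ|`,
so its distribution function is the mass `m {n | s < |zₙ|}`, where `m A = ∑_{n ∈ A} 2ⁿ`.
Cutting every block into halves writes `D z` as the sum of two functions with distribution
function `m {n | s < |zₙ|} / 2`; hence `m {n | s < |zₙ|} ≤ 2 m {n | s < |xₙ|}` for all `s` makes
both halves dominated by `D x`, and `D z ∈ E`. For `z = S₊x` the mass exactly doubles. If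
`o(z) ≤ o(x)`, every `n` with `s < |zₙ|` lies below some `k` with `s < |xₖ|`, and the geometric
series `∑_{n ≤ k} 2ⁿ = 2ᵏ⁺¹` gives the factor `2`. -/

open Set
open scoped ENNReal

lemma int_log_two_eq_of_mem_Ico {n : ℤ} {u : ℝ} (hu : u ∈ Ico ((2 : ℝ) ^ n) (2 ^ (n + 1))) :
    Int.log 2 u = n := by
  have hu0 : 0 < u := (zpow_pos two_pos n).trans_le hu.1
  have h₁ := (Int.zpow_le_iff_le_log (R := ℝ) one_lt_two hu0).1 (by exact_mod_cast hu.1)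
  have h₂ := (Int.lt_zpow_iff_log_lt (R := ℝ) one_lt_two hu0).1 (by exact_mod_cast hu.2)
  omega

lemma mem_Ico_int_log_two {u : ℝ} (hu : 0 < u) :
    u ∈ Ico ((2 : ℝ) ^ Int.log 2 u) (2 ^ (Int.log 2 u + 1)) := by
  constructor
  · exact_mod_cast Int.zpow_log_le_self one_lt_two hu
  · exact_mod_cast Int.lt_zpow_succ_log_self one_lt_two u

lemma Dop_of_pos (x : ℤ → ℝ) {u : ℝ} (hu : 0 < u) : Dop x u = x (Int.log 2 u) := by
  rw [Dop, if_pos hu, ← Real.floor_logb_natCast hu.le, Nat.cast_ofNat]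

lemma Dop_of_nonpos (x : ℤ → ℝ) {u : ℝ} (hu : u ≤ 0) : Dop x u = 0 :=
  if_neg hu.not_gt

lemma measurable_Dop (x : ℤ → ℝ) : Measurable (Dop x) :=
  Measurable.ite (measurableSet_lt measurable_const measurable_id)
    (measurable_from_top.comp ((Real.measurable_log.div_const _).floor)) measurable_const

lemma Dop_add (x y : ℤ → ℝ) : Dop (x + y) = Dop x + Dop y := by
  ext u
  by_cases hu : 0 < u
  · simp [Dop_of_pos _ hu]
  · simp [Dop_of_nonpos _ (not_lt.1 hu)]

lemma Dop_smul (c : ℝ) (x : ℤ → ℝ) : Dop (c • x) = c • Dop x := by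
  ext u
  by_cases hu : 0 < u
  · simp [Dop_of_pos _ hu]
  · simp [Dop_of_nonpos _ (not_lt.1 hu)]

lemma memSZ_add {x y : ℤ → ℝ} (hx : memSZ x) (hy : memSZ y) : memSZ (x + y) := by
  intro n
  obtain ⟨M, hM⟩ := hx n
  obtain ⟨N, hN⟩ := hy n
  refine ⟨M + N, ?_⟩
  rintro _ ⟨k, rfl⟩
  exact (abs_add_le _ _).trans (add_le_add (hM ⟨k, rfl⟩) (hN ⟨k, rfl⟩))

lemma memSZ_smul (c : ℝ) {x : ℤ → ℝ} (hx : memSZ x) : memSZ (c • x) := by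
  intro n
  obtain ⟨M, hM⟩ := hx n
  refine ⟨|c| * M, ?_⟩
  rintro _ ⟨k, rfl⟩
  simpa [abs_mul] using mul_le_mul_of_nonneg_left (hM ⟨k, rfl⟩) (abs_nonneg c)

lemma memSZ_shiftR {x : ℤ → ℝ} (hx : memSZ x) : memSZ (shiftR x) := by
  intro n
  obtain ⟨M, hM⟩ := hx (n - 1)
  refine ⟨M, ?_⟩
  rintro _ ⟨k, rfl⟩
  exact hM ⟨⟨k.1 - 1, by omega⟩, rfl⟩

def dyadicBand (A : Set ℤ) (a b : ℝ) : Set ℝ :=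
  ⋃ n ∈ A, Ico (a * 2 ^ n) (b * 2 ^ n)

noncomputable def dyadicMass (A : Set ℤ) : ℝ≥0∞ :=
  ∑' n, A.indicator (fun n => ENNReal.ofReal (2 ^ n)) n

section dyadicBand

variable {a b : ℝ}

lemma int_log_two_eq_of_mem_Ico_mul (ha : 1 ≤ a) (hb : b ≤ 2) {n : ℤ} {u : ℝ}
    (hu : u ∈ Ico (a * 2 ^ n) (b * 2 ^ n)) : Int.log 2 u = n := by
  have h2n : (0 : ℝ) < 2 ^ n := zpow_pos two_pos n
  refine int_log_two_eq_of_mem_Ico ⟨?_, ?_⟩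
  · nlinarith [hu.1]
  · rw [zpow_add_one₀ two_ne_zero]
    nlinarith [hu.2]

lemma measurableSet_dyadicBand (A : Set ℤ) (a b : ℝ) : MeasurableSet (dyadicBand A a b) :=
  MeasurableSet.biUnion A.to_countable fun _ _ => measurableSet_Ico

lemma volume_dyadicBand (A : Set ℤ) (ha : 1 ≤ a) (hb : b ≤ 2) :
    volume (dyadicBand A a b) = ENNReal.ofReal (b - a) * dyadicMass A := by
  have hdisj : A.PairwiseDisjoint fun n => Ico (a * 2 ^ n) (b * 2 ^ n) :=
    fun m _ n _ hmn => Set.disjoint_left.2 fun u hum hun =>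
      hmn ((int_log_two_eq_of_mem_Ico_mul ha hb hum).symm.trans
        (int_log_two_eq_of_mem_Ico_mul ha hb hun))
  rw [dyadicBand, measure_biUnion A.to_countable hdisj fun _ _ => measurableSet_Ico,
    tsum_subtype A fun n => volume (Ico (a * 2 ^ n) (b * 2 ^ n)), dyadicMass,
    ← ENNReal.tsum_mul_left]
  refine tsum_congr fun n => ?_
  by_cases hn : n ∈ A
  · rw [indicator_of_mem hn, indicator_of_mem hn, Real.volume_Ico, ← sub_mul,
      ENNReal.ofReal_mul' (zpow_pos two_pos n).le]
  · rw [indicator_of_notMem hn, indicator_of_notMem hn, mul_zero]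

lemma dyadicBand_univ_one_two : dyadicBand univ 1 2 = Ioi 0 := by
  ext u
  simp only [dyadicBand, mem_univ, iUnion_true, mem_iUnion, one_mul, mem_Ioi]
  refine ⟨fun ⟨n, hn⟩ => (zpow_pos two_pos n).trans_le hn.1, fun hu => ⟨Int.log 2 u, ?_⟩⟩
  simpa [zpow_add_one₀, mul_comm] using mem_Ico_int_log_two hu

lemma dyadicBand_union {c : ℝ} (A : Set ℤ) (hac : a ≤ c) (hcb : c ≤ b) :
    dyadicBand A a c ∪ dyadicBand A c b = dyadicBand A a b := by
  simp only [dyadicBand, ← iUnion_union_distrib]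
  refine iUnion₂_congr fun n _ => Ico_union_Ico_eq_Ico ?_ ?_ <;> gcongr

lemma disjoint_dyadicBand {c : ℝ} (A B : Set ℤ) (ha : 1 ≤ a) (hac : a ≤ c) (hcb : c ≤ b)
    (hb : b ≤ 2) : Disjoint (dyadicBand A a c) (dyadicBand B c b) := by
  refine Set.disjoint_left.2 fun u hu hu' => ?_
  obtain ⟨m, -, hm⟩ := mem_iUnion₂.1 hu
  obtain ⟨n, -, hn⟩ := mem_iUnion₂.1 hu'
  obtain rfl : m = n := (int_log_two_eq_of_mem_Ico_mul ha (hcb.trans hb) hm).symm.trans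
    (int_log_two_eq_of_mem_Ico_mul (ha.trans hac) hb hn)
  exact hm.2.not_ge hn.1

lemma Dop_of_mem_Ico_mul (z : ℤ → ℝ) (ha : 1 ≤ a) (hb : b ≤ 2) {n : ℤ} {u : ℝ}
    (hu : u ∈ Ico (a * 2 ^ n) (b * 2 ^ n)) : Dop z u = z n := by
  have hu0 : 0 < u := (mul_pos (one_pos.trans_le ha) (zpow_pos two_pos n)).trans_le hu.1
  rw [Dop_of_pos z hu0, int_log_two_eq_of_mem_Ico_mul ha hb hu]

lemma setOf_lt_abs_indicator_Dop (z : ℤ → ℝ) (ha : 1 ≤ a) (hb : b ≤ 2) {s : ℝ} (hs : 0 ≤ s) :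
    {u | 0 < u ∧ s < |(dyadicBand univ a b).indicator (Dop z) u|} =
      dyadicBand {n | s < |z n|} a b := by
  ext u
  constructor
  · rintro ⟨-, hsu⟩
    by_cases hmem : u ∈ dyadicBand univ a b
    · obtain ⟨n, -, hn⟩ := mem_iUnion₂.1 hmem
      rw [indicator_of_mem hmem, Dop_of_mem_Ico_mul z ha hb hn] at hsu
      exact mem_iUnion₂.2 ⟨n, hsu, hn⟩
    · rw [indicator_of_notMem hmem, abs_zero] at hsu
      exact absurd hs hsu.not_ge
  · intro hu
    obtain ⟨n, hsn, hn⟩ := mem_iUnion₂.1 hu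
    have hmem : u ∈ dyadicBand univ a b := mem_iUnion₂.2 ⟨n, trivial, hn⟩
    refine ⟨(mul_pos (one_pos.trans_le ha) (zpow_pos two_pos n)).trans_le hn.1, ?_⟩
    rwa [indicator_of_mem hmem, Dop_of_mem_Ico_mul z ha hb hn]

end dyadicBand

lemma ofReal_two_zpow_add_one (n : ℤ) :
    ENNReal.ofReal ((2 : ℝ) ^ (n + 1)) = 2 * ENNReal.ofReal (2 ^ n) := by
  rw [zpow_add_one₀ two_ne_zero, mul_comm, ENNReal.ofReal_mul zero_le_two, ENNReal.ofReal_ofNat]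

lemma dyadicMass_mono {A B : Set ℤ} (h : A ⊆ B) : dyadicMass A ≤ dyadicMass B :=
  ENNReal.tsum_le_tsum fun n => indicator_le_indicator_of_subset h (fun _ => zero_le) n

lemma dyadicMass_Iic (k : ℤ) : dyadicMass (Iic k) = ENNReal.ofReal (2 ^ (k + 1)) := by
  have hinj : Function.Injective fun m : ℕ => k - m := fun m m' h => by simpa using h
  have hsupp : Function.support ((Iic k).indicator fun n => ENNReal.ofReal (2 ^ n)) ⊆
      range fun m : ℕ => k - m :=
    fun n hn => ⟨(k - n).toNat, by
      have : n ∈ Iic k := mem_of_indicator_ne_zero hn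
      rw [mem_Iic] at this
      simp only
      omega⟩
  have hterm (m : ℕ) : ENNReal.ofReal ((2 : ℝ) ^ (k - m)) = ENNReal.ofReal (2 ^ k) * 2⁻¹ ^ m := by
    rw [zpow_sub₀ two_ne_zero, zpow_natCast, div_eq_mul_inv, ← inv_pow,
      ENNReal.ofReal_mul (zpow_pos two_pos k).le, ENNReal.ofReal_pow (by norm_num),
      ENNReal.ofReal_inv_of_pos two_pos, ENNReal.ofReal_ofNat]
  rw [dyadicMass, ← hinj.tsum_eq hsupp]
  have hmem (m : ℕ) : k - (m : ℤ) ∈ Iic k := by simp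
  simp only [indicator_of_mem (hmem _), hterm, ENNReal.tsum_mul_left, ENNReal.tsum_geometric,
    ENNReal.one_sub_inv_two, inv_inv]
  rw [ofReal_two_zpow_add_one, mul_comm]

lemma dyadicMass_preimage_sub_one (A : Set ℤ) :
    dyadicMass ((· - 1) ⁻¹' A) = 2 * dyadicMass A := by
  rw [dyadicMass, dyadicMass, ← ENNReal.tsum_mul_left, ← (Equiv.addRight 1).tsum_eq]
  refine tsum_congr fun n => ?_
  by_cases hn : n ∈ A
  · rw [indicator_of_mem (by simpa using hn), indicator_of_mem hn, Equiv.coe_addRight,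
      ofReal_two_zpow_add_one]
  · rw [indicator_of_notMem (by simpa using hn), indicator_of_notMem hn, mul_zero]

lemma dyadicMass_le_two_mul_of_forall_exists_ge {A B : Set ℤ} (h : ∀ n ∈ A, ∃ k ∈ B, n ≤ k) :
    dyadicMass A ≤ 2 * dyadicMass B := by
  set w : ℤ → ℝ≥0∞ := fun n => ENNReal.ofReal (2 ^ n)
  calc dyadicMass A ≤ ∑' n, ∑' k, B.indicator (fun k => (Iic k).indicator w n) k := by
        refine ENNReal.tsum_le_tsum fun n => ?_
        by_cases hn : n ∈ A
        · obtain ⟨k, hk, hnk⟩ := h n hn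
          refine le_trans ?_ (ENNReal.le_tsum k)
          rw [indicator_of_mem hn, indicator_of_mem hk, indicator_of_mem (mem_Iic.2 hnk)]
        · rw [indicator_of_notMem hn]
          exact zero_le
    _ = ∑' k, B.indicator (fun k => dyadicMass (Iic k)) k := by
        rw [ENNReal.tsum_comm]
        refine tsum_congr fun k => ?_
        by_cases hk : k ∈ B
        · simp only [indicator_of_mem hk]
          rfl
        · simp only [indicator_of_notMem hk, tsum_zero]
    _ = 2 * dyadicMass B := by
        rw [dyadicMass, ← ENNReal.tsum_mul_left]
        refine tsum_congr fun k => ?_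
        by_cases hk : k ∈ B
        · rw [indicator_of_mem hk, indicator_of_mem hk, dyadicMass_Iic,
            ofReal_two_zpow_add_one]
        · rw [indicator_of_notMem hk, indicator_of_notMem hk, mul_zero]

noncomputable def distribFun (f : ℝ → ℝ) (s : ℝ) : ℝ≥0∞ :=
  volume {u : ℝ | 0 < u ∧ s < |f u|}

lemma rearr_le_rearr_of_distribFun_le {f g : ℝ → ℝ} {t : ℝ}
    (hfg : ∀ s, 0 ≤ s → distribFun f s ≤ distribFun g s)
    (hg : ∃ s, 0 ≤ s ∧ distribFun g s ≤ ENNReal.ofReal t) : rearr f t ≤ rearr g t :=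
  csInf_le_csInf ⟨0, fun _ hs => hs.1⟩ hg fun s hs => ⟨hs.1, (hfg s hs.1).trans hs.2⟩

section distribFun

variable (z : ℤ → ℝ) {s : ℝ}

lemma distribFun_indicator_Dop {a b : ℝ} (ha : 1 ≤ a) (hb : b ≤ 2) (hs : 0 ≤ s) :
    distribFun ((dyadicBand univ a b).indicator (Dop z)) s =
      ENNReal.ofReal (b - a) * dyadicMass {n | s < |z n|} := by
  rw [distribFun, setOf_lt_abs_indicator_Dop z ha hb hs, volume_dyadicBand _ ha hb]

lemma indicator_dyadicBand_one_two_Dop : (dyadicBand univ 1 2).indicator (Dop z) = Dop z := by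
  rw [dyadicBand_univ_one_two, indicator_eq_self]
  exact fun u hu => not_le.1 fun h => hu (Dop_of_nonpos z h)

lemma distribFun_Dop (hs : 0 ≤ s) : distribFun (Dop z) s = dyadicMass {n | s < |z n|} := by
  rw [← indicator_dyadicBand_one_two_Dop, distribFun_indicator_Dop z le_rfl le_rfl hs]
  norm_num

lemma Dop_eq_indicator_add_indicator :
    Dop z = (dyadicBand univ 1 (3 / 2)).indicator (Dop z) +
      (dyadicBand univ (3 / 2) 2).indicator (Dop z) := by
  conv_lhs => rw [← indicator_dyadicBand_one_two_Dop z,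
    ← dyadicBand_union univ (by norm_num : (1 : ℝ) ≤ 3 / 2) (by norm_num : (3 / 2 : ℝ) ≤ 2),
    indicator_union_of_disjoint
      (disjoint_dyadicBand _ _ le_rfl (by norm_num) (by norm_num) le_rfl)]
  rfl

end distribFun

lemma exists_distribFun_Dop_le {x : ℤ → ℝ} (hx : memSZ x) {t : ℝ} (ht : 0 < t) :
    ∃ s, 0 ≤ s ∧ distribFun (Dop x) s ≤ ENNReal.ofReal t := by
  obtain ⟨M, hM⟩ := hx (Int.log 2 t)
  refine ⟨max M 0, le_max_right _ _, ?_⟩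
  have hsub : {n | max M 0 < |x n|} ⊆ Iic (Int.log 2 t - 1) := fun n hn => by
    by_contra h
    have hxn : |x n| ≤ M := hM ⟨⟨n, by rw [mem_Iic] at h; omega⟩, rfl⟩
    exact (hn.trans_le hxn).not_ge (le_max_left M 0)
  rw [distribFun_Dop x (le_max_right _ _)]
  calc _ ≤ dyadicMass (Iic (Int.log 2 t - 1)) := dyadicMass_mono hsub
    _ = ENNReal.ofReal (2 ^ Int.log 2 t) := by rw [dyadicMass_Iic, sub_add_cancel]
    _ ≤ ENNReal.ofReal t :=
      ENNReal.ofReal_le_ofReal (by exact_mod_cast Int.zpow_log_le_self one_lt_two ht)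

lemma Dop_mem_of_dyadicMass_le {E : Set (ℝ → ℝ)} (hE_add : ∀ f g, f ∈ E → g ∈ E → f + g ∈ E)
    (hE_Calkin : ∀ f g, Measurable f → g ∈ E →
      (∀ t : ℝ, 0 < t → rearr f t ≤ rearr g t) → f ∈ E)
    {x z : ℤ → ℝ} (hx : memSZ x) (hxE : Dop x ∈ E)
    (hzx : ∀ s, 0 ≤ s → dyadicMass {n | s < |z n|} ≤ 2 * dyadicMass {n | s < |x n|}) :
    Dop z ∈ E := by
  have half_mem (a b : ℝ) (ha : 1 ≤ a) (hb : b ≤ 2) (hab : b - a = 2⁻¹) :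
      (dyadicBand univ a b).indicator (Dop z) ∈ E := by
    refine hE_Calkin _ _ ((measurable_Dop z).indicator (measurableSet_dyadicBand _ _ _)) hxE
      fun t ht => rearr_le_rearr_of_distribFun_le (fun s hs => ?_) (exists_distribFun_Dop_le hx ht)
    rw [distribFun_indicator_Dop z ha hb hs, distribFun_Dop x hs, hab,
      ENNReal.ofReal_inv_of_pos two_pos, ENNReal.ofReal_ofNat]
    calc 2⁻¹ * dyadicMass _ ≤ 2⁻¹ * (2 * dyadicMass _) := by gcongr; exact hzx s hs
      _ = _ := ENNReal.inv_mul_cancel_left two_ne_zero ENNReal.ofNat_ne_top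
  rw [Dop_eq_indicator_add_indicator]
  exact hE_add _ _ (half_mem 1 (3 / 2) le_rfl (by norm_num) (by norm_num))
    (half_mem (3 / 2) 2 (by norm_num) le_rfl (by norm_num))

lemma exists_ge_lt_abs_of_ordNum_le {x y : ℤ → ℝ} (hy : memSZ y)
    (hxy : ∀ n, ordNum y n ≤ ordNum x n) {s : ℝ} {n : ℤ} (hn : s < |y n|) :
    ∃ k, s < |x k| ∧ n ≤ k := by
  have : Nonempty {k : ℤ // n ≤ k} := ⟨⟨n, le_rfl⟩⟩
  have hyn : |y n| ≤ ordNum y n := le_ciSup (hy n) ⟨n, le_rfl⟩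
  obtain ⟨k, hk⟩ := exists_lt_of_lt_ciSup (hn.trans_le (hyn.trans (hxy n)))
  exact ⟨k.1, hk, k.2⟩

theorem Calkin_to_shiftMonotone_general (E : Set (ℝ → ℝ))
    (hE_add : ∀ f g, f ∈ E → g ∈ E → f + g ∈ E)
    (hE_smul : ∀ (c : ℝ) f, f ∈ E → c • f ∈ E)
    (hE_Calkin : ∀ f g, Measurable f → g ∈ E →
      (∀ t : ℝ, 0 < t → rearr f t ≤ rearr g t) → f ∈ E) :
    (∀ x y, (memSZ x ∧ Dop x ∈ E) → (memSZ y ∧ Dop y ∈ E) →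
      memSZ (x + y) ∧ Dop (x + y) ∈ E) ∧
    (∀ (c : ℝ) x, (memSZ x ∧ Dop x ∈ E) → memSZ (c • x) ∧ Dop (c • x) ∈ E) ∧
    (∀ x, (memSZ x ∧ Dop x ∈ E) → memSZ (shiftR x) ∧ Dop (shiftR x) ∈ E) ∧
    (∀ x y, memSZ y → (memSZ x ∧ Dop x ∈ E) →
      (∀ n, ordNum y n ≤ ordNum x n) → memSZ y ∧ Dop y ∈ E) := by
  refine ⟨?_, ?_, ?_, ?_⟩
  · rintro x y ⟨hx, hxE⟩ ⟨hy, hyE⟩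
    exact ⟨memSZ_add hx hy, Dop_add x y ▸ hE_add _ _ hxE hyE⟩
  · rintro c x ⟨hx, hxE⟩
    exact ⟨memSZ_smul c hx, Dop_smul c x ▸ hE_smul _ _ hxE⟩
  · rintro x ⟨hx, hxE⟩
    exact ⟨memSZ_shiftR hx, Dop_mem_of_dyadicMass_le hE_add hE_Calkin hx hxE
      fun _ _ => (dyadicMass_preimage_sub_one _).le⟩
  · rintro x y hy ⟨hx, hxE⟩ hxy
    exact ⟨hy, Dop_mem_of_dyadicMass_le hE_add hE_Calkin hx hxE fun _ _ =>
      dyadicMass_le_two_mul_of_forall_exists_ge fun _ hn =>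
        exists_ge_lt_abs_of_ordNum_le hy hxy hn⟩

/-- a Calkin function space induces a shift-monotone sequence space
`E(ℤ) = {x : Dx ∈ E(0,∞)}`. -/
theorem Calkin_to_shiftMonotone (E : Set (ℝ → ℝ))
    (hE_meas : ∀ f ∈ E, Measurable f)
    (hE_add : ∀ f g, f ∈ E → g ∈ E → f + g ∈ E)
    (hE_smul : ∀ (c : ℝ) f, f ∈ E → c • f ∈ E)
    (hE_Calkin : ∀ f g, Measurable f → g ∈ E →
      (∀ t : ℝ, 0 < t → rearr f t ≤ rearr g t) → f ∈ E) :
    (∀ x y, (memSZ x ∧ Dop x ∈ E) → (memSZ y ∧ Dop y ∈ E) →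
      memSZ (x + y) ∧ Dop (x + y) ∈ E) ∧
    (∀ (c : ℝ) x, (memSZ x ∧ Dop x ∈ E) → memSZ (c • x) ∧ Dop (c • x) ∈ E) ∧
    (∀ x, (memSZ x ∧ Dop x ∈ E) → memSZ (shiftR x) ∧ Dop (shiftR x) ∈ E) ∧
    (∀ x y, memSZ y → (memSZ x ∧ Dop x ∈ E) →
      (∀ n, ordNum y n ≤ ordNum x n) → memSZ y ∧ Dop y ∈ E) :=
  Calkin_to_shiftMonotone_general E hE_add hE_smul hE_Calkin
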